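/- For every admissible reparameterization τ : [0,1] → [0,1], the cost satisfies the lower bound J(τ) ≥ (∫₀¹ 𝔤(σ)^{1/2} dσ)². -/

import Mathlib

/-!
Substituting `σ = τ t` turns `∫₀¹ √𝔤(σ) dσ` into `∫₀¹ √𝔤(τ t) τ'(t) dt`, and Cauchy–Schwarz on
`[0, 1]` bounds the square of the latter by `∫₀¹ 𝔤(τ t) τ'(t)² dt = J(τ)`.
-/

open MeasureTheory Set

theorem sq_integral_le_measureReal_univ_mul_integral_sq {α : Type*} [MeasurableSpace α]
    {μ : Measure α} [IsFiniteMeasure μ] {f : α → ℝ} (hf : Integrable f μ)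
    (hf2 : Integrable (fun x ↦ f x ^ 2) μ) :
    (∫ x, f x ∂μ) ^ 2 ≤ μ.real univ * ∫ x, f x ^ 2 ∂μ := by
  -- `c ↦ ∫ (f - c)²` is a nonnegative quadratic polynomial, so its discriminant is `≤ 0`.
  have hquad : ∀ c : ℝ, 0 ≤ μ.real univ * (c * c) + (-2 * ∫ x, f x ∂μ) * c + ∫ x, f x ^ 2 ∂μ := by
    intro c
    have hexpand : ∫ x, (f x - c) ^ 2 ∂μ
        = μ.real univ * (c * c) + (-2 * ∫ x, f x ∂μ) * c + ∫ x, f x ^ 2 ∂μ := by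
      have hsplit : (fun x ↦ (f x - c) ^ 2) = fun x ↦ (f x ^ 2 - 2 * c * f x) + c ^ 2 := by
        ext x; ring
      have hlin : Integrable (fun x ↦ f x ^ 2 - 2 * c * f x) μ := hf2.sub (hf.const_mul _)
      rw [hsplit, integral_add hlin (integrable_const _), integral_sub hf2 (hf.const_mul _),
        integral_const_mul, integral_const, smul_eq_mul]
      ring
    exact hexpand ▸ integral_nonneg fun x ↦ sq_nonneg _
  have hdiscrim := discrim_le_zero hquad
  rw [discrim] at hdiscrim
  linarith

theorem sq_intervalIntegral_le_mul_intervalIntegral_sq {a b : ℝ} (hab : a ≤ b) {f : ℝ → ℝ}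
    (hf : ContinuousOn f (Icc a b)) :
    (∫ x in a..b, f x) ^ 2 ≤ (b - a) * ∫ x in a..b, f x ^ 2 := by
  have hint : IntegrableOn f (Ioc a b) := (hf.integrableOn_Icc).mono_set Ioc_subset_Icc_self
  have hint2 : IntegrableOn (fun x ↦ f x ^ 2) (Ioc a b) :=
    ((hf.pow 2).integrableOn_Icc).mono_set Ioc_subset_Icc_self
  have := sq_integral_le_measureReal_univ_mul_integral_sq hint hint2
  rwa [measureReal_restrict_apply_univ, Real.volume_real_Ioc_of_le hab,
    ← intervalIntegral.integral_of_le hab, ← intervalIntegral.integral_of_le hab] at this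

theorem gora_cost_lower_bound_general
    (𝔤 : ℝ → ℝ)
    (h𝔤_cont : ContinuousOn 𝔤 (Set.Icc 0 1))
    (h𝔤_pos : ∀ σ ∈ Set.Icc (0:ℝ) 1, 0 < 𝔤 σ)
    (τ τ' : ℝ → ℝ)
    (hτ_maps : Set.MapsTo τ (Set.Icc 0 1) (Set.Icc 0 1))
    (hτ_deriv : ∀ t ∈ Set.Icc (0:ℝ) 1, HasDerivWithinAt τ (τ' t) (Set.Icc 0 1) t)
    (hτ'_cont : ContinuousOn τ' (Set.Icc 0 1))
    (hτ0 : τ 0 = 0) (hτ1 : τ 1 = 1) :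
    (∫ σ in (0:ℝ)..1, Real.sqrt (𝔤 σ)) ^ 2
      ≤ ∫ t in (0:ℝ)..1, 𝔤 (τ t) * (τ' t) ^ 2 := by
  have huIcc : uIcc (0:ℝ) 1 = Icc 0 1 := uIcc_of_le zero_le_one
  have hτ_cont : ContinuousOn τ (Icc 0 1) := fun t ht ↦ (hτ_deriv t ht).continuousWithinAt
  set s : ℝ → ℝ := fun σ ↦ √(𝔤 σ) with hs
  have hs_cont : ContinuousOn s (Icc 0 1) := h𝔤_cont.sqrt
  have hsubst : ∫ t in (0:ℝ)..1, (s ∘ τ) t * τ' t = ∫ σ in (0:ℝ)..1, s σ := by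
    rw [intervalIntegral.integral_comp_mul_deriv'' (huIcc ▸ hτ_cont) ?_ (huIcc ▸ hτ'_cont)
      (huIcc ▸ hs_cont.mono hτ_maps.image_subset), hτ0, hτ1]
    intro t ht
    rw [min_eq_left zero_le_one, max_eq_right zero_le_one] at ht
    exact ((hτ_deriv t (Ioo_subset_Icc_self ht)).hasDerivAt
      (Icc_mem_nhds ht.1 ht.2)).hasDerivWithinAt
  have hsq : ∀ t ∈ uIcc (0:ℝ) 1, ((s ∘ τ) t * τ' t) ^ 2 = 𝔤 (τ t) * τ' t ^ 2 :=
    fun t ht ↦ by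
      rw [Function.comp_apply, hs, mul_pow, Real.sq_sqrt (h𝔤_pos _ (hτ_maps (huIcc ▸ ht))).le]
  calc (∫ σ in (0:ℝ)..1, s σ) ^ 2
      = (∫ t in (0:ℝ)..1, (s ∘ τ) t * τ' t) ^ 2 := by rw [hsubst]
    _ ≤ (1 - 0) * ∫ t in (0:ℝ)..1, ((s ∘ τ) t * τ' t) ^ 2 :=
      sq_intervalIntegral_le_mul_intervalIntegral_sq zero_le_one
        ((hs_cont.comp hτ_cont hτ_maps).mul hτ'_cont)
    _ = ∫ t in (0:ℝ)..1, 𝔤 (τ t) * τ' t ^ 2 := by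
      rw [sub_zero, one_mul, intervalIntegral.integral_congr hsq]

/-- **Cauchy–Schwarz lower bound for the GORA cost.** For every admissible
reparameterization `τ`, `J(τ) ≥ (∫₀¹ √(𝔤(σ)) dσ)²`. -/
theorem gora_cost_lower_bound
    (𝔤 : ℝ → ℝ)
    (h𝔤_cont : ContinuousOn 𝔤 (Set.Icc 0 1))
    (h𝔤_pos : ∀ σ ∈ Set.Icc (0:ℝ) 1, 0 < 𝔤 σ)
    (τ τ' : ℝ → ℝ)
    (hτ_maps : Set.MapsTo τ (Set.Icc 0 1) (Set.Icc 0 1))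
    (hτ_deriv : ∀ t ∈ Set.Icc (0:ℝ) 1, HasDerivWithinAt τ (τ' t) (Set.Icc 0 1) t)
    (hτ'_cont : ContinuousOn τ' (Set.Icc 0 1))
    (hτ'_nonneg : ∀ t ∈ Set.Icc (0:ℝ) 1, 0 ≤ τ' t)
    (hτ0 : τ 0 = 0) (hτ1 : τ 1 = 1) :
    (∫ σ in (0:ℝ)..1, Real.sqrt (𝔤 σ)) ^ 2
      ≤ ∫ t in (0:ℝ)..1, 𝔤 (τ t) * (τ' t) ^ 2 :=
  gora_cost_lower_bound_general 𝔤 h𝔤_cont h𝔤_pos τ τ' hτ_maps hτ_deriv hτ'_cont hτ0 hτ1
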